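/- The reconstruction error of gappy POD is controlled by the inverse of the smallest singular value of C U_r: for any x ∈ ℝᵐ, ‖x − U_r (C U_r)⁻¹ C x‖₂ ≤ (1 + ‖(C U_r)⁻¹‖₂ ‖C‖₂) · ‖x − U_r U_rᵀ x‖₂, where ‖·‖₂ denotes the spectral (operator) norm. -/

import Mathlib

open Matrix BigOperators

/-- Euclidean norm of a vector. -/
noncomputable def euclNorm {k : ℕ} (v : Fin k → ℝ) : ℝ :=
  Real.sqrt (∑ i, v i ^ 2)

/-- Spectral (operator) norm of a matrix, with respect to Euclidean norms. -/
noncomputable def opNorm {a b : ℕ} (M : Matrix (Fin a) (Fin b) ℝ) : ℝ :=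
  sSup {c : ℝ | ∃ x : Fin b → ℝ, euclNorm x ≤ 1 ∧ c = euclNorm (M *ᵥ x)}

/-! The gappy POD reconstruction `P = U (C U)⁻¹ C` is an oblique projection onto the range of `U`,
so it fixes `U Uᵀ x` and hence `x - P x = (I - P) (x - U Uᵀ x)`. As `U` is an isometry,
`‖I - P‖ ≤ 1 + ‖(C U)⁻¹‖ ‖C‖`. -/

open scoped Matrix.Norms.L2Operator

lemma euclNorm_eq_norm_toLp {k : ℕ} (v : Fin k → ℝ) : euclNorm v = ‖WithLp.toLp 2 v‖ := by
  simp [euclNorm, EuclideanSpace.norm_eq]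

lemma opNorm_eq_l2_opNorm {a b : ℕ} (M : Matrix (Fin a) (Fin b) ℝ) : opNorm M = ‖M‖ := by
  rw [opNorm, l2_opNorm_def, ← ContinuousLinearMap.sSup_unitClosedBall_eq_norm]
  congr 1
  ext c
  simp only [Set.mem_ofPred_eq, Set.mem_image, Metric.mem_closedBall, dist_zero_right,
    euclNorm_eq_norm_toLp]
  exact ⟨fun ⟨x, hx, hc⟩ => ⟨WithLp.toLp 2 x, hx, hc.symm⟩,
    fun ⟨x, hx, hc⟩ => ⟨x.ofLp, hx, hc.symm⟩⟩

lemma opNorm_nonneg {a b : ℕ} (M : Matrix (Fin a) (Fin b) ℝ) : 0 ≤ opNorm M :=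
  opNorm_eq_l2_opNorm M ▸ norm_nonneg M

lemma euclNorm_mulVec_le {a b : ℕ} (M : Matrix (Fin a) (Fin b) ℝ) (v : Fin b → ℝ) :
    euclNorm (M *ᵥ v) ≤ opNorm M * euclNorm v := by
  rw [euclNorm_eq_norm_toLp, euclNorm_eq_norm_toLp, opNorm_eq_l2_opNorm]
  exact M.l2_opNorm_mulVec _

lemma euclNorm_sub_le {k : ℕ} (v w : Fin k → ℝ) :
    euclNorm (v - w) ≤ euclNorm v + euclNorm w := by
  simpa only [euclNorm_eq_norm_toLp, WithLp.toLp_sub] using norm_sub_le _ _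

lemma euclNorm_mulVec_of_transpose_mul_self {m r : ℕ} {U : Matrix (Fin m) (Fin r) ℝ}
    (hU : Uᵀ * U = 1) (v : Fin r → ℝ) : euclNorm (U *ᵥ v) = euclNorm v := by
  have h : (U *ᵥ v) ⬝ᵥ (U *ᵥ v) = v ⬝ᵥ v := by
    rw [dotProduct_mulVec, ← vecMul_transpose, vecMul_vecMul, hU, vecMul_one]
  simpa [euclNorm, dotProduct, pow_two] using congrArg Real.sqrt h

lemma sub_mulVec_mulVec_mulVec_eq_of_mul_mul_eq_one {R m n p : Type*} [CommRing R]
    [Fintype m] [Fintype n] [Fintype p] [DecidableEq n]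
    {U : Matrix m n R} {A : Matrix n p R} {C : Matrix p m R} (h : A * (C * U) = 1)
    (x : m → R) (w : n → R) :
    x - U *ᵥ (A *ᵥ (C *ᵥ x)) = (x - U *ᵥ w) - U *ᵥ (A *ᵥ (C *ᵥ (x - U *ᵥ w))) := by
  have hfix : U *ᵥ (A *ᵥ (C *ᵥ (U *ᵥ w))) = U *ᵥ w := by
    rw [mulVec_mulVec w C U, mulVec_mulVec w A (C * U), h, one_mulVec]
  rw [mulVec_sub, mulVec_sub, mulVec_sub, hfix]
  abel

lemma euclNorm_sub_mulVec_mulVec_mulVec_le {m r p : ℕ} {U : Matrix (Fin m) (Fin r) ℝ}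
    (hU : Uᵀ * U = 1) (A : Matrix (Fin r) (Fin p) ℝ) (C : Matrix (Fin p) (Fin m) ℝ)
    (y : Fin m → ℝ) :
    euclNorm (y - U *ᵥ (A *ᵥ (C *ᵥ y))) ≤ (1 + opNorm A * opNorm C) * euclNorm y :=
  calc euclNorm (y - U *ᵥ (A *ᵥ (C *ᵥ y)))
      ≤ euclNorm y + euclNorm (U *ᵥ (A *ᵥ (C *ᵥ y))) := euclNorm_sub_le _ _
    _ = euclNorm y + euclNorm (A *ᵥ (C *ᵥ y)) := by
        rw [euclNorm_mulVec_of_transpose_mul_self hU]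
    _ ≤ euclNorm y + opNorm A * (opNorm C * euclNorm y) := by
        gcongr
        exact (euclNorm_mulVec_le A _).trans
          (mul_le_mul_of_nonneg_left (euclNorm_mulVec_le C y) (opNorm_nonneg A))
    _ = (1 + opNorm A * opNorm C) * euclNorm y := by ring

theorem gappy_pod_error_bound_general {m r : ℕ}
    (U : Matrix (Fin m) (Fin r) ℝ) (C : Matrix (Fin r) (Fin m) ℝ)
    (hU : Uᵀ * U = 1)
    (hinv : IsUnit (C * U).det)
    (x : Fin m → ℝ) :
    euclNorm (x - U *ᵥ ((C * U)⁻¹ *ᵥ (C *ᵥ x))) ≤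
      (1 + opNorm (C * U)⁻¹ * opNorm C) * euclNorm (x - U *ᵥ (Uᵀ *ᵥ x)) := by
  rw [sub_mulVec_mulVec_mulVec_eq_of_mul_mul_eq_one (nonsing_inv_mul _ hinv) x (Uᵀ *ᵥ x)]
  exact euclNorm_sub_mulVec_mulVec_mulVec_le hU _ _ _

theorem gappy_pod_error_bound {m r : ℕ}
    (U : Matrix (Fin m) (Fin r) ℝ) (C : Matrix (Fin r) (Fin m) ℝ)
    (hU : Uᵀ * U = 1)
    (f : Fin r → Fin m) (hf : Function.Injective f)
    (hC : ∀ i j, C i j = if f i = j then 1 else 0)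
    (hinv : IsUnit (C * U).det)
    (x : Fin m → ℝ) :
    euclNorm (x - U *ᵥ ((C * U)⁻¹ *ᵥ (C *ᵥ x))) ≤
      (1 + opNorm (C * U)⁻¹ * opNorm C) * euclNorm (x - U *ᵥ (Uᵀ *ᵥ x)) :=
  gappy_pod_error_bound_general U C hU hinv x
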